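/- arXiv:1701.01781 — 6 statements merged into one kernel-verified Lean document; each statement's English description precedes it below -/
import Mathlib

section
/- There is a bijection between the set of stable monomial ideals J in k[x₁,x₂] whose Groebner escalier (the set of monomials not in J) has exactly p elements and exactly h distinct x₂-exponents, and the set of integer partitions of p into h distinct positive parts. -/
/-! A monomial ideal `I ⊂ k[x₁,x₂]` with finite escalier is determined by its row lengths
`λₑ = #{a | x₁^a x₂^e ∉ I}`: it is the staircase `{x₁^a x₂^e | λₑ ≤ a}`, and the staircase of
an antitone `λ` is always an ideal. In two variables stability only asks that
`x₁^(a+1) x₂^e ∈ I` imply `x₁^a x₂^(e+1) ∈ I`, i.e. that `λ` decrease strictly while it is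
positive. Hence the nonzero row lengths of a stable ideal form a strictly decreasing sequence
of positive integers summing to `#N(I)`, and every such sequence arises from exactly one
stable staircase. -/

def MonomialIdeal {n : ℕ} (I : Set (Fin n → ℕ)) : Prop :=
  ∀ τ ∈ I, ∀ σ : Fin n → ℕ, τ + σ ∈ I

def IsStable {n : ℕ} (I : Set (Fin n → ℕ)) : Prop :=
  ∀ τ ∈ I, ∀ m j : Fin n, τ m ≠ 0 → (∀ l, l < m → τ l = 0) → m < j →
    τ - Pi.single m 1 + Pi.single j 1 ∈ I

/-- The monomial `x₁^a x₂^e` in `k[x₁,x₂]`, as an exponent vector. -/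
def mon2 (a e : ℕ) : Fin 2 → ℕ := ![a, e]

lemma Set.eq_Iio_natCard_of_isLowerSet {s : Set ℕ} (hs : IsLowerSet s) (hfin : s.Finite) :
    s = Set.Iio (Nat.card s) := by
  rcases hs.eq_univ_or_Iio with rfl | ⟨a, rfl⟩
  · exact absurd hfin Set.infinite_univ
  · simp

lemma antitone_of_succ_lt_of_pos {g : ℕ → ℕ} (hg : ∀ e, 0 < g (e + 1) → g (e + 1) < g e) :
    Antitone g :=
  antitone_nat_of_succ_le fun e => by
    rcases Nat.eq_zero_or_pos (g (e + 1)) with h0 | hpos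
    · omega
    · exact (hg e hpos).le

@[simp] lemma mon2_apply_zero (a e : ℕ) : mon2 a e 0 = a := rfl

@[simp] lemma mon2_apply_one (a e : ℕ) : mon2 a e 1 = e := rfl

lemma mon2_eta (τ : Fin 2 → ℕ) : mon2 (τ 0) (τ 1) = τ := by
  funext i; fin_cases i <;> rfl

lemma mon2_add (a e b f : ℕ) : mon2 a e + mon2 b f = mon2 (a + b) (e + f) := by
  funext i; fin_cases i <;> rfl

lemma mon2_injective_left (e : ℕ) : Function.Injective (mon2 · e) :=
  fun _ _ hab => congrFun hab 0

lemma sub_single_add_single_eq_mon2 (τ : Fin 2 → ℕ) :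
    τ - Pi.single 0 1 + Pi.single 1 1 = mon2 (τ 0 - 1) (τ 1 + 1) := by
  funext i; fin_cases i <;> simp [mon2]

lemma isStable_iff_mon2 {I : Set (Fin 2 → ℕ)} :
    IsStable I ↔ ∀ a e, mon2 (a + 1) e ∈ I → mon2 a (e + 1) ∈ I := by
  constructor
  · intro hI a e hmem
    simpa [sub_single_add_single_eq_mon2] using
      hI _ hmem 0 1 (by simp) (fun l hl => absurd hl (Fin.not_lt_zero l)) Fin.zero_lt_one
  · intro hI τ hτ m j hm _ hmj
    obtain ⟨rfl, rfl⟩ : m = 0 ∧ j = 1 := by omega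
    rw [sub_single_add_single_eq_mon2]
    exact hI _ _ (by rwa [Nat.sub_add_cancel (Nat.pos_of_ne_zero hm), mon2_eta])

noncomputable def rowLength (I : Set (Fin 2 → ℕ)) (e : ℕ) : ℕ :=
  Nat.card {a : ℕ | mon2 a e ∉ I}

def staircase (g : ℕ → ℕ) : Set (Fin 2 → ℕ) :=
  {τ | g (τ 1) ≤ τ 0}

@[simp] lemma mon2_mem_staircase {g : ℕ → ℕ} {a e : ℕ} : mon2 a e ∈ staircase g ↔ g e ≤ a :=
  Iff.rfl

lemma rowLength_staircase (g : ℕ → ℕ) (e : ℕ) : rowLength (staircase g) e = g e := by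
  simp [rowLength]

lemma setOf_exists_mon2_not_mem_staircase (g : ℕ → ℕ) :
    {e | ∃ a, mon2 a e ∉ staircase g} = {e | 0 < g e} := by
  ext e
  simpa using ⟨fun ⟨_, ha⟩ => by omega, fun he => ⟨0, he⟩⟩

lemma monomialIdeal_staircase {g : ℕ → ℕ} (hg : Antitone g) : MonomialIdeal (staircase g) :=
  fun _ hτ _ => (hg (Nat.le_add_right _ _)).trans (hτ.trans (Nat.le_add_right _ _))

lemma isStable_staircase_iff {g : ℕ → ℕ} :
    IsStable (staircase g) ↔ ∀ e, 0 < g (e + 1) → g (e + 1) < g e := by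
  simp only [isStable_iff_mon2, mon2_mem_staircase]
  constructor
  · intro hg e hpos
    have := hg (g (e + 1) - 1) e
    omega
  · intro hg a e hle
    have := hg e
    omega

lemma setOf_not_mem_staircase {g : ℕ → ℕ} {h : ℕ} (hg : ∀ e, h ≤ e → g e = 0) :
    {τ | τ ∉ staircase g} =
      ((Finset.range h).sigma fun e => Finset.range (g e)).image (fun x => mon2 x.2 x.1) := by
  ext τ
  simp only [staircase, Set.mem_ofPred_eq, not_le, Finset.coe_image, Set.mem_image,
    Finset.mem_coe, Finset.mem_sigma, Finset.mem_range, Sigma.exists]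
  constructor
  · intro hτ
    refine ⟨τ 1, τ 0, ⟨?_, hτ⟩, mon2_eta τ⟩
    by_contra hle
    rw [hg _ (not_lt.1 hle)] at hτ
    exact Nat.not_lt_zero _ hτ
  · rintro ⟨e, a, ⟨-, ha⟩, rfl⟩
    exact ha

lemma finite_setOf_not_mem_staircase {g : ℕ → ℕ} {h : ℕ} (hg : ∀ e, h ≤ e → g e = 0) :
    {τ | τ ∉ staircase g}.Finite := by
  rw [setOf_not_mem_staircase hg]
  exact Finset.finite_toSet _

lemma natCard_setOf_not_mem_staircase {g : ℕ → ℕ} {h : ℕ} (hg : ∀ e, h ≤ e → g e = 0) :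
    Nat.card {τ | τ ∉ staircase g} = ∑ e ∈ Finset.range h, g e := by
  have hinj : Function.Injective fun x : (_ : ℕ) × ℕ => mon2 x.2 x.1 := by
    rintro ⟨e, a⟩ ⟨e', a'⟩ heq
    obtain ⟨rfl, rfl⟩ : a = a' ∧ e = e' := ⟨congrFun heq 0, congrFun heq 1⟩
    rfl
  rw [setOf_not_mem_staircase hg, Nat.card_coe_set_eq, Set.ncard_coe_finset,
    Finset.card_image_of_injective _ hinj, Finset.card_sigma]
  simp

section MonomialIdeal

variable {I : Set (Fin 2 → ℕ)}

lemma setOf_mon2_not_mem_eq_Iio (hI : MonomialIdeal I) (hfin : {τ | τ ∉ I}.Finite) (e : ℕ) :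
    {a | mon2 a e ∉ I} = Set.Iio (rowLength I e) := by
  refine Set.eq_Iio_natCard_of_isLowerSet (fun a b hba ha hb => ha ?_)
    (hfin.preimage (mon2_injective_left e).injOn)
  simpa [mon2_add, Nat.add_sub_cancel' hba] using hI _ hb (mon2 (a - b) 0)

lemma staircase_rowLength (hI : MonomialIdeal I) (hfin : {τ | τ ∉ I}.Finite) :
    staircase (rowLength I) = I := by
  ext τ
  rw [← mon2_eta τ, mon2_mem_staircase, ← not_lt, ← Set.mem_Iio,
    ← setOf_mon2_not_mem_eq_Iio hI hfin, Set.mem_ofPred_eq, not_not]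

lemma rowLength_pos_iff (hI : MonomialIdeal I) (hfin : {τ | τ ∉ I}.Finite) (e : ℕ) :
    0 < rowLength I e ↔ e < Nat.card {e | ∃ a, mon2 a e ∉ I} := by
  have hrows : IsLowerSet {e | ∃ a, mon2 a e ∉ I} := fun e b hbe ⟨a, ha⟩ =>
    ⟨a, fun hb => ha (by simpa [mon2_add, Nat.add_sub_cancel' hbe] using hI _ hb (mon2 0 (e - b)))⟩
  have hfin_rows : {e | ∃ a, mon2 a e ∉ I}.Finite :=
    (hfin.image (· 1)).subset fun e ⟨a, ha⟩ => ⟨mon2 a e, ha, rfl⟩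
  calc 0 < rowLength I e ↔ ∃ a, a ∈ Set.Iio (rowLength I e) :=
        ⟨fun he => ⟨0, he⟩, fun ⟨_, ha⟩ => Nat.zero_lt_of_lt ha⟩
    _ ↔ e ∈ {e | ∃ a, mon2 a e ∉ I} := by rw [← setOf_mon2_not_mem_eq_Iio hI hfin]; rfl
    _ ↔ e < Nat.card {e | ∃ a, mon2 a e ∉ I} :=
        Set.ext_iff.1 (Set.eq_Iio_natCard_of_isLowerSet hrows hfin_rows) e
lemma rowLength_eq_zero_of_le (hI : MonomialIdeal I) (hfin : {τ | τ ∉ I}.Finite) {e : ℕ}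
    (he : Nat.card {e | ∃ a, mon2 a e ∉ I} ≤ e) : rowLength I e = 0 :=
  Nat.eq_zero_of_not_pos (mt (rowLength_pos_iff hI hfin e).1 (not_lt.2 he))

end MonomialIdeal

def IsDistinctPartition {h : ℕ} (p : ℕ) (f : Fin h → ℕ) : Prop :=
  (∀ e, 0 < f e) ∧ StrictAnti f ∧ ∑ e, f e = p

def extendByZero {h : ℕ} (f : Fin h → ℕ) (e : ℕ) : ℕ :=
  if he : e < h then f ⟨e, he⟩ else 0

section ExtendByZero

variable {h : ℕ} (f : Fin h → ℕ)

@[simp] lemma extendByZero_val (e : Fin h) : extendByZero f e = f e :=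
  dif_pos e.2

lemma extendByZero_of_le {e : ℕ} (he : h ≤ e) : extendByZero f e = 0 :=
  dif_neg (not_lt.2 he)

lemma extendByZero_restrict {g : ℕ → ℕ} (hg : ∀ e, h ≤ e → g e = 0) :
    extendByZero (fun e : Fin h => g e) = g := by
  funext e
  by_cases he : e < h
  · exact dif_pos he
  · rw [extendByZero_of_le _ (not_lt.1 he), hg e (not_lt.1 he)]

variable {f}

lemma extendByZero_pos_iff (hf : ∀ e, 0 < f e) (e : ℕ) : 0 < extendByZero f e ↔ e < h := by
  by_cases he : e < h
  · simpa [extendByZero, he] using hf ⟨e, he⟩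
  · simp [he, extendByZero_of_le f (not_lt.1 he)]

lemma extendByZero_succ_lt_of_pos (hf : StrictAnti f) (e : ℕ)
    (hpos : 0 < extendByZero f (e + 1)) : extendByZero f (e + 1) < extendByZero f e := by
  by_cases he : e + 1 < h
  · rw [extendByZero, dif_pos he, extendByZero, dif_pos (Nat.lt_of_succ_lt he)]
    exact hf (Fin.mk_lt_mk.2 (Nat.lt_succ_self e))
  · rw [extendByZero_of_le f (not_lt.1 he)] at hpos
    exact absurd hpos (lt_irrefl 0)

end ExtendByZero

lemma isDistinctPartition_rowLength {I : Set (Fin 2 → ℕ)} (hI : MonomialIdeal I)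
    (hst : IsStable I) (hfin : {τ | τ ∉ I}.Finite) :
    IsDistinctPartition (Nat.card {τ | τ ∉ I})
      (fun e : Fin (Nat.card {e | ∃ a, mon2 a e ∉ I}) => rowLength I e) := by
  set h := Nat.card {e | ∃ a, mon2 a e ∉ I}
  have hpos := rowLength_pos_iff hI hfin
  have hI_eq := staircase_rowLength hI hfin
  have hstep := isStable_staircase_iff.1 (hI_eq.symm ▸ hst)
  have hanti : StrictAntiOn (rowLength I) (Set.Iio h) :=
    strictAntiOn_of_add_one_lt Set.ordConnected_Iio fun e _ _ he => hstep e ((hpos _).2 he)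
  refine ⟨fun e => (hpos e).2 e.2, fun i j hij => hanti i.2 j.2 hij, ?_⟩
  rw [Fin.sum_univ_eq_sum_range (rowLength I),
    ← natCard_setOf_not_mem_staircase fun e => rowLength_eq_zero_of_le hI hfin, hI_eq]

lemma staircase_extendByZero_mem {h p : ℕ} {f : Fin h → ℕ} (hf : IsDistinctPartition p f) :
    MonomialIdeal (staircase (extendByZero f)) ∧ IsStable (staircase (extendByZero f)) ∧
      {τ | τ ∉ staircase (extendByZero f)}.Finite ∧
      Nat.card {τ | τ ∉ staircase (extendByZero f)} = p ∧
      Nat.card {e | ∃ a, mon2 a e ∉ staircase (extendByZero f)} = h := by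
  obtain ⟨hpos, hanti, hsum⟩ := hf
  have hstep := extendByZero_succ_lt_of_pos hanti
  have hzero : ∀ e, h ≤ e → extendByZero f e = 0 := fun _ => extendByZero_of_le f
  refine ⟨monomialIdeal_staircase (antitone_of_succ_lt_of_pos hstep),
    isStable_staircase_iff.2 hstep, finite_setOf_not_mem_staircase hzero, ?_, ?_⟩
  · rw [natCard_setOf_not_mem_staircase hzero, ← Fin.sum_univ_eq_sum_range, ← hsum]
    simp
  · rw [setOf_exists_mon2_not_mem_staircase]
    simp [extendByZero_pos_iff hpos]

/-- The map sending a stable monomial ideal `J ⊂ k[x₁,x₂]` whose escalier has `p`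
elements and exactly `h` distinct `x₂`-exponents to the tuple `(λ₀,…,λ_{h-1})`,
`λₑ = #{a : x₁^a x₂^e ∈ N(J)}`, is a bijection onto the integer partitions of `p`
into `h` distinct positive parts. -/
theorem stable_ideals_two_vars_biject_with_distinct_partitions (p h : ℕ) :
    Set.BijOn
      (fun I : Set (Fin 2 → ℕ) => fun e : Fin h =>
        Nat.card {a : ℕ | mon2 a (e : ℕ) ∉ I})
      {I : Set (Fin 2 → ℕ) | MonomialIdeal I ∧ IsStable I ∧
        {τ : Fin 2 → ℕ | τ ∉ I}.Finite ∧
        Nat.card {τ : Fin 2 → ℕ | τ ∉ I} = p ∧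
        Nat.card {e : ℕ | ∃ a : ℕ, mon2 a e ∉ I} = h}
      {f : Fin h → ℕ | (∀ e, 0 < f e) ∧ StrictAnti f ∧ ∑ e, f e = p} := by
  refine Set.InvOn.bijOn (f' := fun f => staircase (extendByZero f)) ⟨?_, ?_⟩ ?_ ?_
  · rintro I ⟨hI, -, hfin, -, rfl⟩
    change staircase (extendByZero fun e : Fin _ => rowLength I e) = I
    rw [extendByZero_restrict fun e => rowLength_eq_zero_of_le hI hfin]
    exact staircase_rowLength hI hfin
  · intro f _
    funext e
    exact (rowLength_staircase _ _).trans (extendByZero_val f e)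
  · rintro I ⟨hI, hst, hfin, rfl, rfl⟩
    exact isDistinctPartition_rowLength hI hst hfin
  · intro f hf
    exact staircase_extendByZero_mem hf
end

section
/- The number of stable monomial ideals J in k[x₁,x₂] whose quotient k[x₁,x₂]/J has dimension p as a vector space (equivalently, constant affine Hilbert polynomial p) equals the total number of integer partitions of p into distinct positive parts, i.e. Σ_{i=1}^{h} Q(p,i) where h = ⌊(-1+√(1+8p))/2⌋. -/
/-- `Q p i` : the number of integer partitions of `p` into exactly `i` distinct parts. -/
noncomputable def Q (p i : ℕ) : ℕ :=
  Nat.card {q : Nat.Partition p // q.parts.Nodup ∧ Multiset.card q.parts = i}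

/-! ### Auxiliary lemmas -/

lemma getd_inj : ∀ (l l' : List ℕ), (∀ x ∈ l, 0 < x) → (∀ x ∈ l', 0 < x) →
    (∀ b, l.getD b 0 = l'.getD b 0) → l = l' := by
  intro l
  induction l with
  | nil =>
    intro l' _ h' h
    cases l' with
    | nil => rfl
    | cons a t => exact absurd (h 0).symm (by have := h' a (by simp); simp; omega)
  | cons a t ih =>
    intro l' hpos h' h
    cases l' with
    | nil => exact absurd (h 0) (by have := hpos a (by simp); simp; omega)
    | cons a' t' =>
      have h0 := h 0
      simp at h0
      have := ih t' (fun x hx => hpos x (by simp [hx])) (fun x hx => h' x (by simp [hx]))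
        (fun b => h (b + 1))
      rw [h0, this]

lemma dc_finset (A : Finset ℕ) (hdc : ∀ x ∈ A, ∀ y, y ≤ x → y ∈ A) (x : ℕ) :
    x ∈ A ↔ x < A.card := by
  constructor
  · intro hx
    have hsub : Finset.range (x + 1) ⊆ A := fun y hy =>
      hdc x hx y (Nat.lt_succ_iff.mp (Finset.mem_range.mp hy))
    have := Finset.card_le_card hsub
    simpa using this
  · intro hx
    by_contra hmem
    have hsub : A ⊆ Finset.range x := by
      intro y hy
      simp only [Finset.mem_range]
      by_contra hyx
      exact hmem (hdc y hy x (by omega))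
    have := Finset.card_le_card hsub
    simp at this
    omega

lemma getbound : ∀ (l : List ℕ), l.Pairwise (· > ·) → (∀ x ∈ l, 0 < x) →
    ∀ i (h : i < l.length), l.length - i ≤ l.get ⟨i, h⟩ := by
  intro l
  induction l with
  | nil => intro _ _ i h; simp at h
  | cons a t ih =>
    intro hpw hpos i h
    have hpwt : t.Pairwise (· > ·) := (List.pairwise_cons.mp hpw).2
    have hpost : ∀ x ∈ t, 0 < x := fun x hx => hpos x (by simp [hx])
    cases i with
    | zero =>
      simp only [List.length_cons, List.get]
      cases t with
      | nil => have := hpos a (by simp); simp; omega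
      | cons c t' =>
        have hac : a > c := (List.pairwise_cons.mp hpw).1 c (by simp)
        have := ih hpwt hpost 0 (by simp)
        simp at this ⊢
        omega
    | succ i =>
      have := ih hpwt hpost i (by simpa using h)
      simpa using this

lemma sum_univ_get (l : List ℕ) : ∑ i : Fin l.length, l.get i = l.sum := by
  conv_rhs => rw [← List.ofFn_get l]
  rw [List.sum_ofFn]

lemma triangle_le_sum (l : List ℕ) (hpw : l.Pairwise (· > ·)) (hpos : ∀ x ∈ l, 0 < x) :
    l.length * (l.length + 1) ≤ 2 * l.sum := by
  set n := l.length with hn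
  have h1 : ∑ i : Fin n, (n - (i : ℕ)) ≤ ∑ i : Fin n, l.get i :=
    Finset.sum_le_sum fun i _ => getbound l hpw hpos i i.isLt
  have h2 : ∑ i : Fin n, l.get i = l.sum := sum_univ_get l
  have h3 : ∑ i : Fin n, (n - (i : ℕ)) = ∑ i ∈ Finset.range n, (n - i) :=
    Fin.sum_univ_eq_sum_range _ _
  have h4 : ∑ i ∈ Finset.range n, (n - i) = ∑ i ∈ Finset.range n, (i + 1) := by
    rw [← Finset.sum_range_reflect]
    apply Finset.sum_congr rfl
    intro i hi
    simp at hi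
    omega
  have h5 : (∑ i ∈ Finset.range n, (i + 1)) * 2 = n * (n + 1) := by
    have := Finset.sum_range_id_mul_two (n + 1)
    rw [Finset.sum_range_succ'] at this
    simpa [Nat.mul_comm] using this
  omega

lemma vec_eq_self (τ : Fin 2 → ℕ) : ![τ 0, τ 1] = τ := by
  funext i; fin_cases i <;> rfl

lemma stable_eq (a b : ℕ) :
    (![a+1, b] - Pi.single 0 1 + Pi.single 1 1 : Fin 2 → ℕ) = ![a, b+1] := by
  funext i
  fin_cases i <;> simp [Matrix.vecHead, Matrix.vecTail, Pi.single_apply]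

lemma stable_vals (τ : Fin 2 → ℕ) :
    (τ - Pi.single 0 1 + Pi.single 1 1 : Fin 2 → ℕ) 0 = τ 0 - 1 ∧
    (τ - Pi.single 0 1 + Pi.single 1 1 : Fin 2 → ℕ) 1 = τ 1 + 1 := by
  constructor <;> simp [Pi.single_apply]

/-! ### The ideal attached to a strictly decreasing list -/

def idealOf (l : List ℕ) : Set (Fin 2 → ℕ) := {τ | l.getD (τ 1) 0 ≤ τ 0}

lemma getd_pos_lt_length (l : List ℕ) (b : ℕ) (h : 0 < l.getD b 0) : b < l.length := by
  by_contra hb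
  rw [List.getD_eq_default l 0 (le_of_not_gt hb)] at h
  omega

lemma getd_get (l : List ℕ) (b : ℕ) (hb : b < l.length) : l.getD b 0 = l.get ⟨b, hb⟩ := by
  rw [List.getD_eq_getElem l 0 hb]; rfl

lemma getd_lt (l : List ℕ) (hpw : l.Pairwise (· > ·)) (b b' : ℕ) (hb : b < b')
    (hb' : b' < l.length) : l.getD b' 0 < l.getD b 0 := by
  rw [List.getD_eq_getElem l 0 hb', List.getD_eq_getElem l 0 (hb.trans hb')]
  exact List.pairwise_iff_getElem.mp hpw b b' (hb.trans hb') hb' hb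

lemma getd_anti (l : List ℕ) (hpw : l.Pairwise (· > ·)) (b b' : ℕ) (hb : b ≤ b') :
    l.getD b' 0 ≤ l.getD b 0 := by
  rcases eq_or_lt_of_le hb with rfl | hb
  · exact le_rfl
  · rcases lt_or_ge b' l.length with h | h
    · exact (getd_lt l hpw b b' hb h).le
    · rw [List.getD_eq_default l 0 h]; exact Nat.zero_le _

lemma monomialIdeal_idealOf (l : List ℕ) (hpw : l.Pairwise (· > ·)) :
    MonomialIdeal (idealOf l) := by
  intro τ hτ σ
  have hτ' : l.getD (τ 1) 0 ≤ τ 0 := hτ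
  have := getd_anti l hpw (τ 1) (τ 1 + σ 1) (Nat.le_add_right _ _)
  show l.getD ((τ + σ) 1) 0 ≤ (τ + σ) 0
  simp only [Pi.add_apply]
  omega

lemma stable_step_idealOf (l : List ℕ) (hpw : l.Pairwise (· > ·)) (τ : Fin 2 → ℕ)
    (hτ : τ ∈ idealOf l) (h0 : τ 0 ≠ 0) :
    τ - Pi.single 0 1 + Pi.single 1 1 ∈ idealOf l := by
  have hτ' : l.getD (τ 1) 0 ≤ τ 0 := hτ
  have key : l.getD (τ 1 + 1) 0 < τ 0 := by
    rcases Nat.eq_zero_or_pos (l.getD (τ 1 + 1) 0) with h | h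
    · omega
    · exact lt_of_lt_of_le (getd_lt l hpw (τ 1) (τ 1 + 1) (by omega)
        (getd_pos_lt_length l _ h)) hτ'
  obtain ⟨e0, e1⟩ := stable_vals τ
  simp only [idealOf, Set.mem_setOf_eq]
  rw [e0, e1]
  omega

lemma isStable_idealOf (l : List ℕ) (hpw : l.Pairwise (· > ·)) : IsStable (idealOf l) := by
  intro τ hτ m j hm _ hmj
  have hml : m.1 < j.1 := hmj
  have hj2 : j.1 < 2 := j.isLt
  have hm0 : m = 0 := by
    apply Fin.ext
    simp only [Fin.val_zero]
    omega
  have hj1 : j = 1 := by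
    apply Fin.ext
    simp only [Fin.val_one]
    omega
  subst hm0 hj1
  exact stable_step_idealOf l hpw τ hτ hm

noncomputable def sigEquiv (l : List ℕ) :
    (Σ b : Fin l.length, Fin (l.get b)) ≃ {τ : Fin 2 → ℕ | τ 0 < l.getD (τ 1) 0} where
  toFun x := ⟨![x.2.1, x.1.1], by
    show (![(x.2.1 : ℕ), (x.1.1 : ℕ)] : Fin 2 → ℕ) 0 < l.getD (![(x.2.1 : ℕ), (x.1.1 : ℕ)] 1) 0
    simp only [Matrix.cons_val_zero, Matrix.cons_val_one, Matrix.head_cons]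
    rw [getd_get l _ x.1.isLt]
    exact x.2.isLt⟩
  invFun s := by
    refine ⟨⟨s.1 1, getd_pos_lt_length l _ (lt_of_le_of_lt (Nat.zero_le _) s.2)⟩, ⟨s.1 0, ?_⟩⟩
    have h2 : s.1 0 < l.getD (s.1 1) 0 := s.2
    rwa [getd_get l _ (getd_pos_lt_length l _ (lt_of_le_of_lt (Nat.zero_le _) s.2))] at h2
  left_inv x := by
    obtain ⟨b, a⟩ := x
    ext <;> simp
  right_inv s := by
    apply Subtype.ext
    funext i
    fin_cases i <;> rfl

lemma compl_idealOf (l : List ℕ) :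
    {τ : Fin 2 → ℕ | τ ∉ idealOf l} = {τ : Fin 2 → ℕ | τ 0 < l.getD (τ 1) 0} := by
  ext τ
  simp only [idealOf, Set.mem_setOf_eq]
  omega

lemma finite_compl_idealOf (l : List ℕ) : {τ : Fin 2 → ℕ | τ ∉ idealOf l}.Finite := by
  rw [compl_idealOf]
  have : Finite {τ : Fin 2 → ℕ | τ 0 < l.getD (τ 1) 0} := Finite.of_equiv _ (sigEquiv l)
  exact Set.finite_coe_iff.mp this

lemma card_compl_idealOf (l : List ℕ) :
    Nat.card {τ : Fin 2 → ℕ | τ ∉ idealOf l} = l.sum := by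
  rw [compl_idealOf, ← Nat.card_congr (sigEquiv l), Nat.card_eq_fintype_card,
    Fintype.card_sigma]
  simpa using sum_univ_get l

lemma mem_idealOf_vec (l : List ℕ) (a b : ℕ) : ![a, b] ∈ idealOf l ↔ l.getD b 0 ≤ a := by
  simp only [idealOf, Set.mem_setOf_eq, Matrix.cons_val_zero, Matrix.cons_val_one,
    Matrix.head_cons]

lemma idealOf_inj (l l' : List ℕ) (hpos : ∀ x ∈ l, 0 < x) (hpos' : ∀ x ∈ l', 0 < x)
    (h : idealOf l = idealOf l') : l = l' := by
  apply getd_inj l l' hpos hpos'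
  intro b
  have key : ∀ a, l.getD b 0 ≤ a ↔ l'.getD b 0 ≤ a := by
    intro a
    rw [← mem_idealOf_vec, ← mem_idealOf_vec, h]
  have h1 := (key (l'.getD b 0)).mpr le_rfl
  have h2 := (key (l.getD b 0)).mp le_rfl
  omega

/-! ### From ideals to lists -/

lemma exists_list_of_ideal (I : Set (Fin 2 → ℕ)) (h1 : MonomialIdeal I) (h2 : IsStable I)
    (hfin : {τ : Fin 2 → ℕ | τ ∉ I}.Finite) :
    ∃ l : List ℕ, l.Pairwise (· > ·) ∧ (∀ x ∈ l, 0 < x) ∧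
      l.sum = Nat.card {τ : Fin 2 → ℕ | τ ∉ I} ∧ idealOf l = I := by
  classical
  set T := hfin.toFinset with hT
  set A : ℕ → Finset ℕ := fun b => (T.filter (fun τ => τ 1 = b)).image (fun τ => τ 0) with hA
  set r : ℕ → ℕ := fun b => (A b).card with hr
  have mem_A : ∀ a b, a ∈ A b ↔ ![a, b] ∉ I := by
    intro a b
    simp only [hA, Finset.mem_image, Finset.mem_filter, hT, Set.Finite.mem_toFinset,
      Set.mem_setOf_eq]
    constructor
    · rintro ⟨τ, ⟨hτI, hτ1⟩, hτ0⟩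
      have : ![a, b] = τ := by rw [← hτ0, ← hτ1]; exact vec_eq_self τ
      rwa [this]
    · intro h
      exact ⟨![a, b], ⟨h, rfl⟩, rfl⟩
  have hdc : ∀ b, ∀ x ∈ A b, ∀ y, y ≤ x → y ∈ A b := by
    intro b x hx y hy
    rw [mem_A] at hx ⊢
    intro hyI
    apply hx
    have := h1 _ hyI ![x - y, 0]
    have he : ![y, b] + ![x - y, 0] = ![x, b] := by
      funext i; fin_cases i <;> simp [Matrix.vecHead, Matrix.vecTail] <;> omega
    rwa [he] at this
  have rowchar : ∀ a b, ![a, b] ∉ I ↔ a < r b := by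
    intro a b
    rw [← mem_A]
    exact dc_finset (A b) (hdc b) a
  have step : ∀ b, 0 < r (b + 1) → r (b + 1) < r b := by
    intro b hb
    have h1' : (r (b+1) - 1) < r (b+1) := by omega
    have hmem : ![r (b+1) - 1, b+1] ∉ I := (rowchar _ _).mpr h1'
    have hmem2 : ![r (b+1) - 1 + 1, b] ∉ I := by
      intro hIn
      have := h2 _ hIn 0 1 (by simp) (fun l hl => absurd hl (by simp [Fin.lt_def]))
        (by decide)
      rw [stable_eq] at this
      exact hmem this
    have := (rowchar _ _).mp hmem2
    omega
  have hex : ∃ b, r b = 0 := by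
    refine ⟨(T.sup fun τ => τ 1) + 1, Finset.card_eq_zero.mpr ?_⟩
    rw [Finset.eq_empty_iff_forall_notMem]
    intro a ha
    rw [mem_A] at ha
    have hmemT : ![a, (T.sup fun τ => τ 1) + 1] ∈ T := by
      rw [hT, Set.Finite.mem_toFinset]; exact ha
    have := Finset.le_sup (f := fun τ => τ 1) hmemT
    simp only [Matrix.cons_val_one, Matrix.head_cons] at this
    exact Nat.not_succ_le_self _ this
  set k := Nat.find hex with hk
  have rk : r k = 0 := Nat.find_spec hex
  have rpos : ∀ b, b < k → 0 < r b := fun b hb =>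
    Nat.pos_of_ne_zero (Nat.find_min hex hb)
  have rzero : ∀ b, k ≤ b → r b = 0 := by
    intro b hb
    induction b, hb using Nat.le_induction with
    | base => exact rk
    | succ b hb ih =>
      by_contra h
      have := step b (Nat.pos_of_ne_zero h)
      omega
  have rmono : ∀ j, j < k → ∀ i, i < j → r j < r i := by
    intro j
    induction j with
    | zero => intro _ i hi; omega
    | succ j ih =>
      intro hjk i hij
      have h1' : r (j+1) < r j := step j (rpos _ hjk)
      rcases Nat.lt_or_ge i j with h | h
      · exact h1'.trans (ih (by omega) i h)
      · have : i = j := by omega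
        rwa [this]
  refine ⟨List.ofFn (fun i : Fin k => r i), ?_, ?_, ?_, ?_⟩
  · rw [List.pairwise_iff_getElem]
    intro i j hi hj hij
    simp only [List.getElem_ofFn]
    simp only [List.length_ofFn] at hi hj
    exact rmono j hj i hij
  · intro x hx
    rw [List.mem_ofFn] at hx
    obtain ⟨i, rfl⟩ := hx
    exact rpos i i.isLt
  · rw [List.sum_ofFn]
    have hcard : Nat.card {τ : Fin 2 → ℕ | τ ∉ I} = T.card := by
      rw [Nat.card_coe_set_eq, Set.ncard_eq_toFinset_card _ hfin]
    rw [hcard]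
    rw [Finset.card_eq_sum_card_fiberwise (f := fun τ => τ 1) (t := Finset.range k)]
    · rw [Fin.sum_univ_eq_sum_range]
      apply Finset.sum_congr rfl
      intro b _
      simp only [hr, hA]
      apply Finset.card_image_of_injOn
      intro τ hτ τ' hτ' h00
      simp only [Finset.mem_coe, Finset.mem_filter] at hτ hτ'
      have : ![τ 0, τ 1] = ![τ' 0, τ' 1] := by
        rw [show τ 0 = τ' 0 from h00, hτ.2, hτ'.2]
      rwa [vec_eq_self, vec_eq_self] at this
    · intro τ hτ
      rw [Finset.mem_coe, Set.Finite.mem_toFinset] at hτ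
      have : ![τ 0, τ 1] ∉ I := by rwa [vec_eq_self]
      have := (rowchar _ _).mp this
      rw [Finset.mem_coe, Finset.mem_range]
      beta_reduce
      by_contra hb
      rw [rzero _ (by omega)] at this
      omega
  · have getd_eq : ∀ b, (List.ofFn (fun i : Fin k => r i)).getD b 0 = r b := by
      intro b
      rcases Nat.lt_or_ge b k with h | h
      · rw [List.getD_eq_getElem _ 0 (by simpa using h)]
        simp
      · rw [List.getD_eq_default _ 0 (by simpa using h), rzero _ h]
    ext τ
    rw [idealOf, Set.mem_setOf_eq, getd_eq]
    constructor
    · intro h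
      by_contra hτI
      have : ![τ 0, τ 1] ∉ I := by rwa [vec_eq_self]
      have := (rowchar _ _).mp this
      omega
    · intro h
      by_contra hle
      have : ![τ 0, τ 1] ∉ I := (rowchar _ _).mpr (by omega)
      rw [vec_eq_self] at this
      exact this h

/-! ### Partitions and sorted lists -/

def sortedList {p : ℕ} (q : Nat.Partition p) : List ℕ := Multiset.sort q.parts (· ≥ ·)

lemma sortedList_coe {p : ℕ} (q : Nat.Partition p) : (↑(sortedList q) : Multiset ℕ) = q.parts :=
  Multiset.sort_eq _ _

lemma sortedList_pairwise {p : ℕ} (q : Nat.Partition p) (hnd : q.parts.Nodup) :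
    (sortedList q).Pairwise (· > ·) := by
  have hs : (sortedList q).Pairwise (· ≥ ·) := Multiset.pairwise_sort _ _
  have hnd' : (sortedList q).Nodup := by
    rw [← Multiset.coe_nodup, sortedList_coe]; exact hnd
  exact (hs.and hnd').imp (fun {a b} ⟨ha, hb⟩ => lt_of_le_of_ne ha (Ne.symm hb))

lemma sortedList_pos {p : ℕ} (q : Nat.Partition p) : ∀ x ∈ sortedList q, 0 < x := by
  intro x hx
  apply q.parts_pos
  rw [← sortedList_coe]
  exact Multiset.mem_coe.mpr hx

lemma sortedList_sum {p : ℕ} (q : Nat.Partition p) : (sortedList q).sum = p := by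
  have := q.parts_sum
  rw [← sortedList_coe] at this
  simpa using this

lemma sortedList_length {p : ℕ} (q : Nat.Partition p) :
    (sortedList q).length = Multiset.card q.parts := by
  rw [← sortedList_coe]
  rfl

/-! ### The bijection -/

noncomputable def F (p : ℕ) (q : {q : Nat.Partition p // q.parts.Nodup}) :
    {I : Set (Fin 2 → ℕ) | MonomialIdeal I ∧ IsStable I ∧
        {τ : Fin 2 → ℕ | τ ∉ I}.Finite ∧
        Nat.card {τ : Fin 2 → ℕ | τ ∉ I} = p} :=
  ⟨idealOf (sortedList q.1), by
    have hpw := sortedList_pairwise q.1 q.2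
    refine ⟨monomialIdeal_idealOf _ hpw, isStable_idealOf _ hpw, finite_compl_idealOf _, ?_⟩
    rw [card_compl_idealOf, sortedList_sum]⟩

lemma F_bijective (p : ℕ) : Function.Bijective (F p) := by
  constructor
  · intro q q' h
    have h2 : idealOf (sortedList q.1) = idealOf (sortedList q'.1) := congrArg Subtype.val h
    have h3 : sortedList q.1 = sortedList q'.1 :=
      idealOf_inj _ _ (sortedList_pos q.1) (sortedList_pos q'.1) h2
    have h4 : q.1.parts = q'.1.parts := by
      rw [← sortedList_coe q.1, ← sortedList_coe q'.1, h3]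
    exact Subtype.ext (Nat.Partition.ext h4)
  · rintro ⟨I, hI1, hI2, hI3, hI4⟩
    obtain ⟨l, hpw, hpos, hsum, hid⟩ := exists_list_of_ideal I hI1 hI2 hI3
    have hnd : (↑l : Multiset ℕ).Nodup :=
      Multiset.coe_nodup.mpr ((hpw.imp (fun h => ne_of_gt h)))
    refine ⟨⟨⟨↑l, fun hi => hpos _ (Multiset.mem_coe.mp hi), by
      simpa using hsum.trans hI4⟩, hnd⟩, ?_⟩
    apply Subtype.ext
    show idealOf (sortedList _) = I
    have hsl : sortedList (⟨(↑l : Multiset ℕ), fun hi => hpos _ (Multiset.mem_coe.mp hi), by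
        simpa using hsum.trans hI4⟩ : Nat.Partition p) = l := by
      have hperm : (Multiset.sort (↑l : Multiset ℕ) (· ≥ ·)).Perm l :=
        Multiset.coe_eq_coe.mp (Multiset.sort_eq _ _)
      exact List.Perm.eq_of_pairwise' (Multiset.pairwise_sort _ _)
        (hpw.imp (fun h => le_of_lt h)) hperm
    rw [hsl, hid]

/-! ### Counting: the partition side -/

lemma card_bound {p : ℕ} (hp : 0 < p) (q : Nat.Partition p) (hnd : q.parts.Nodup) :
    1 ≤ Multiset.card q.parts ∧
      Multiset.card q.parts ≤ Nat.floor ((-1 + Real.sqrt (1 + 8 * (p : ℝ))) / 2) := by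
  set i := Multiset.card q.parts with hi
  have hpw := sortedList_pairwise q hnd
  have htri : i * (i + 1) ≤ 2 * p := by
    have := triangle_le_sum (sortedList q) hpw (sortedList_pos q)
    rwa [sortedList_length, sortedList_sum, ← hi] at this
  constructor
  · rcases Nat.eq_zero_or_pos i with h0 | h0
    · exfalso
      have hparts : q.parts = 0 := Multiset.card_eq_zero.mp (by omega)
      have hsum := q.parts_sum
      rw [hparts] at hsum
      simp at hsum
      omega
    · omega
  · apply Nat.le_floor
    have hsq : ((2 * i + 1 : ℕ) : ℝ) ≤ Real.sqrt (1 + 8 * (p : ℝ)) := by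
      rw [Real.le_sqrt (by positivity)]
      · have : ((i * (i + 1) : ℕ) : ℝ) ≤ ((2 * p : ℕ) : ℝ) := Nat.cast_le.mpr htri
        push_cast at this ⊢
        nlinarith
      · positivity
    push_cast at hsq ⊢
    linarith

/-! ### Main theorem -/

theorem count_stable_ideals_two_vars (p : ℕ) (hp : 0 < p) :
    Nat.card {I : Set (Fin 2 → ℕ) | MonomialIdeal I ∧ IsStable I ∧
        {τ : Fin 2 → ℕ | τ ∉ I}.Finite ∧
        Nat.card {τ : Fin 2 → ℕ | τ ∉ I} = p} =
      ∑ i ∈ Finset.Icc 1 (Nat.floor ((-1 + Real.sqrt (1 + 8 * (p : ℝ))) / 2)),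
        Q p i := by
  classical
  have h1 : Nat.card {I : Set (Fin 2 → ℕ) | MonomialIdeal I ∧ IsStable I ∧
      {τ : Fin 2 → ℕ | τ ∉ I}.Finite ∧ Nat.card {τ : Fin 2 → ℕ | τ ∉ I} = p} =
      Nat.card {q : Nat.Partition p // q.parts.Nodup} :=
    (Nat.card_congr (Equiv.ofBijective (F p) (F_bijective p))).symm
  rw [h1]
  set h := Nat.floor ((-1 + Real.sqrt (1 + 8 * (p : ℝ))) / 2) with hh
  have h2 : Nat.card {q : Nat.Partition p // q.parts.Nodup} =
      (Finset.univ.filter (fun q : Nat.Partition p => q.parts.Nodup)).card := by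
    rw [Nat.card_eq_fintype_card, Fintype.card_subtype]
  have h3 : ∀ i, Q p i = (Finset.univ.filter
      (fun q : Nat.Partition p => q.parts.Nodup ∧ Multiset.card q.parts = i)).card := by
    intro i
    rw [Q, Nat.card_eq_fintype_card, Fintype.card_subtype]
  rw [h2]
  rw [Finset.card_eq_sum_card_fiberwise
    (f := fun q : Nat.Partition p => Multiset.card q.parts) (t := Finset.Icc 1 h)]
  · apply Finset.sum_congr rfl
    intro i _
    rw [h3 i, Finset.filter_filter]
  · intro q hq
    rw [Finset.mem_coe, Finset.mem_filter] at hq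
    obtain ⟨hb1, hb2⟩ := card_bound hp q hq.2
    rw [Finset.mem_coe, Finset.mem_Icc]
    exact ⟨hb1, hb2⟩
end

section
/- A monomial ideal J in k[x₁,...,xₙ] is stable if and only if its star set F(J) = { τ ∉ N(J) : τ/min(τ) ∈ N(J) } equals its minimal monomial generating set G(J). -/
def starSet {n : ℕ} (I : Set (Fin n → ℕ)) : Set (Fin n → ℕ) :=
  {τ | τ ∈ I ∧ ∃ m : Fin n, τ m ≠ 0 ∧ (∀ l, l < m → τ l = 0) ∧
    τ - Pi.single m 1 ∉ I}

def minGens {n : ℕ} (I : Set (Fin n → ℕ)) : Set (Fin n → ℕ) :=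
  {τ | τ ∈ I ∧ ∀ j : Fin n, τ j ≠ 0 → τ - Pi.single j 1 ∉ I}

theorem exists_ne_zero_forall_lt_eq_zero {ι M : Type*} [Preorder ι] [WellFoundedLT ι] [Zero M]
    {τ : ι → M} (hτ : τ ≠ 0) : ∃ m, τ m ≠ 0 ∧ ∀ l < m, τ l = 0 := by
  obtain ⟨i, hi⟩ := Function.ne_iff.mp hτ
  obtain ⟨m, hm, hmin⟩ := wellFounded_lt.has_min {i | τ i ≠ 0} ⟨i, hi⟩
  exact ⟨m, hm, fun l hl => not_not.mp fun h => hmin l h hl⟩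

theorem Pi.single_one_le_of_ne_zero {ι : Type*} [DecidableEq ι] {τ : ι → ℕ} {j : ι}
    (hj : τ j ≠ 0) : Pi.single j 1 ≤ τ := by
  intro i
  by_cases hij : i = j
  · subst hij
    simpa using Nat.one_le_iff_ne_zero.mpr hj
  · simp [hij]

section

variable {n : ℕ} {J : Set (Fin n → ℕ)}

theorem minGens_subset_starSet (h0 : (0 : Fin n → ℕ) ∉ J) : minGens J ⊆ starSet J := by
  rintro τ ⟨hτ, hgen⟩
  obtain ⟨m, hm, hlt⟩ := exists_ne_zero_forall_lt_eq_zero (ne_of_mem_of_not_mem hτ h0)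
  exact ⟨hτ, m, hm, hlt, hgen m hm⟩

theorem IsStable.starSet_subset_minGens (hst : IsStable J) : starSet J ⊆ minGens J := by
  rintro τ ⟨hτ, m, hm, hlt, hstar⟩
  refine ⟨hτ, fun j hj hdiv => ?_⟩
  rcases lt_trichotomy j m with hjm | rfl | hmj
  · exact hj (hlt j hjm)
  · exact hstar hdiv
  have hmove := hst (τ - Pi.single j 1) hdiv m j
    (by simpa [Pi.single_apply, hmj.ne] using hm)
    (fun l hl => by simp [(hl.trans hmj).ne, hlt l hl]) hmj
  have hj' : (τ - Pi.single m 1 : Fin n → ℕ) j ≠ 0 := by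
    simpa [Pi.single_apply, hmj.ne'] using hj
  rw [tsub_right_comm, tsub_add_cancel_of_le (Pi.single_one_le_of_ne_zero hj')] at hmove
  exact hstar hmove

theorem MonomialIdeal.isStable_of_starSet_subset_minGens (hJ : MonomialIdeal J)
    (h : starSet J ⊆ minGens J) : IsStable J := by
  intro τ hτ m j hm hlt hmj
  by_contra hmove
  have hstar : τ + Pi.single j 1 ∈ starSet J := by
    refine ⟨hJ τ hτ _, m, by simp [hmj.ne, hm],
      fun l hl => by simp [(hl.trans hmj).ne, hlt l hl], ?_⟩
    rwa [← tsub_add_eq_add_tsub (Pi.single_one_le_of_ne_zero hm)]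
  exact (h hstar).2 j (by simp) (by rwa [add_tsub_cancel_right])

end

theorem stable_iff_starSet_eq_minGens {n : ℕ}
    (J : Set (Fin n → ℕ)) (hJ : MonomialIdeal J)
    (h0 : (0 : Fin n → ℕ) ∉ J) :
    IsStable J ↔ starSet J = minGens J :=
  ⟨fun hst => hst.starSet_subset_minGens.antisymm (minGens_subset_starSet h0),
    fun h => hJ.isStable_of_starSet_subset_minGens h.subset⟩
end

section
/- For every monomial ideal I, the star set F(I) is a stably complete generating set of I: it generates I, and for every τ ∈ F(I) the set of multiplicative variables of τ with respect to F(I) is exactly { xᵢ : xᵢ ≤ min(τ) }. Moreover F(I) is the unique stably complete system of monomial generators of I. -/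
def IsMult {n : ℕ} (M : Set (Fin n → ℕ)) (τ : Fin n → ℕ) (j : Fin n) : Prop :=
  ¬ ∃ τ' ∈ M, τ j < τ' j ∧ ∀ l : Fin n, j < l → τ' l = τ l

def cone {n : ℕ} (M : Set (Fin n → ℕ)) (τ : Fin n → ℕ) : Set (Fin n → ℕ) :=
  {υ | ∃ σ : Fin n → ℕ, (∀ l : Fin n, σ l ≠ 0 → IsMult M τ l) ∧ υ = τ + σ}

def IsCompleteSystem {n : ℕ} (M : Set (Fin n → ℕ)) : Prop :=
  ∀ τ ∈ M, ∀ j : Fin n, ¬ IsMult M τ j → ∃ τ' ∈ M, τ + Pi.single j 1 ∈ cone M τ'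

def IsStablyComplete {n : ℕ} (M : Set (Fin n → ℕ)) : Prop :=
  IsCompleteSystem M ∧ ∀ τ ∈ M, ∀ j : Fin n, (IsMult M τ j ↔ ∀ l : Fin n, l < j → τ l = 0)

def genBy {n : ℕ} (M : Set (Fin n → ℕ)) : Set (Fin n → ℕ) :=
  {υ | ∃ τ ∈ M, ∃ σ : Fin n → ℕ, υ = τ + σ}

namespace StarAux

variable {n : ℕ}

lemma le_mem {I : Set (Fin n → ℕ)} (hI : MonomialIdeal I) {a b : Fin n → ℕ}
    (ha : a ∈ I) (hab : ∀ l, a l ≤ b l) : b ∈ I := by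
  have hb : b = a + (b - a) := by
    funext l
    simp only [Pi.add_apply, Pi.sub_apply]
    have := hab l
    omega
  rw [hb]; exact hI a ha _

lemma mem_ne_zero {I : Set (Fin n → ℕ)} (h0 : (0 : Fin n → ℕ) ∉ I) {τ : Fin n → ℕ}
    (hτ : τ ∈ I) : τ ≠ 0 := fun h => h0 (h ▸ hτ)

lemma exists_min {τ : Fin n → ℕ} (h : τ ≠ 0) :
    ∃ m : Fin n, τ m ≠ 0 ∧ ∀ l, l < m → τ l = 0 := by
  classical
  have hne : (Finset.univ.filter fun l => τ l ≠ 0).Nonempty := by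
    by_contra hc
    apply h
    funext l
    by_contra hl
    exact hc ⟨l, Finset.mem_filter.mpr ⟨Finset.mem_univ l, hl⟩⟩
  set s := Finset.univ.filter fun l => τ l ≠ 0 with hs
  refine ⟨s.min' hne, ?_, ?_⟩
  · have hmem := s.min'_mem hne
    simp only [hs, Finset.mem_filter] at hmem
    exact hmem.2
  · intro l hl
    by_contra hτl
    have : s.min' hne ≤ l := s.min'_le l (by simp only [hs, Finset.mem_filter]; exact ⟨Finset.mem_univ l, hτl⟩)
    omega

lemma single_apply (j l : Fin n) : (Pi.single j 1 : Fin n → ℕ) l = if l = j then 1 else 0 := by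
  simp [Pi.single_apply]

lemma genBy_self {M : Set (Fin n → ℕ)} {υ : Fin n → ℕ} (hυ : υ ∈ M) : υ ∈ genBy M :=
  ⟨υ, hυ, 0, by simp⟩


lemma reduce {I : Set (Fin n → ℕ)} (hI : MonomialIdeal I) (h0 : (0 : Fin n → ℕ) ∉ I) :
    ∀ N : ℕ, ∀ τ : Fin n → ℕ, τ ∈ I → (∑ l, τ l) ≤ N →
    ∃ w ∈ starSet I, ∃ σ : Fin n → ℕ,
      τ = w + σ ∧ ∀ l, σ l ≠ 0 → ∀ l', l' < l → w l' = 0 := by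
  intro N
  induction N with
  | zero =>
    intro τ hτ hsum
    exfalso
    apply mem_ne_zero h0 hτ
    funext l
    have h1 : τ l ≤ ∑ l, τ l := Finset.single_le_sum (fun i _ => Nat.zero_le _) (Finset.mem_univ l)
    simp only [Pi.zero_apply]
    omega
  | succ N ih =>
    intro τ hτ hsum
    obtain ⟨m, hm, hz⟩ := exists_min (mem_ne_zero h0 hτ)
    by_cases hd : τ - Pi.single m 1 ∈ I
    · have hpt : ∀ l, (τ - Pi.single m 1 : Fin n → ℕ) l = τ l - (if l = m then 1 else 0) := by
        intro l; simp [Pi.sub_apply, single_apply]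
      have hsum' : (∑ l, (τ - Pi.single m 1 : Fin n → ℕ) l) ≤ N := by
        have h1 : (∑ l, (τ - Pi.single m 1 : Fin n → ℕ) l) + ∑ l, (Pi.single m 1 : Fin n → ℕ) l = ∑ l, τ l := by
          rw [← Finset.sum_add_distrib]
          apply Finset.sum_congr rfl
          intro l _
          rw [hpt l, single_apply]
          rcases eq_or_ne l m with h | h
          · subst h
            rw [if_pos rfl]
            have : τ l ≠ 0 := hm
            omega
          · simp [h]
        have h2 : (∑ l, (Pi.single m 1 : Fin n → ℕ) l) = 1 := by
          rw [Finset.sum_eq_single m]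
          · simp
          · intro b _ hb; rw [single_apply]; simp [hb]
          · intro hm'; exact absurd (Finset.mem_univ m) hm'
        omega
      obtain ⟨w, hw, σ', heq, hcond⟩ := ih (τ - Pi.single m 1) hd hsum'
      have heq' : ∀ l, (τ - Pi.single m 1 : Fin n → ℕ) l = w l + σ' l := fun l => by rw [heq]; rfl
      refine ⟨w, hw, σ' + Pi.single m 1, ?_, ?_⟩
      · funext l
        have h3 := heq' l
        rw [hpt l] at h3
        simp only [Pi.add_apply, single_apply]
        rcases eq_or_ne l m with h | h
        · rw [if_pos h] at h3 ⊢
          have hτm : τ l ≠ 0 := h ▸ hm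
          omega
        · simp only [if_neg h] at h3 ⊢; omega
      · intro l hl l' hl'
        rcases eq_or_ne l m with h | h
        · subst h
          have h4 := heq' l'
          rw [hpt l'] at h4
          have h5 : τ l' = 0 := hz l' hl'
          omega
        · apply hcond l _ l' hl'
          simp only [Pi.add_apply, single_apply, if_neg h] at hl
          omega
    · refine ⟨τ, ⟨hτ, m, hm, hz, hd⟩, 0, by simp, fun l hl => absurd rfl hl⟩

lemma genBy_starSet {I : Set (Fin n → ℕ)} (hI : MonomialIdeal I) (h0 : (0 : Fin n → ℕ) ∉ I) :
    genBy (starSet I) = I := by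
  ext τ
  constructor
  · rintro ⟨w, hw, σ, rfl⟩
    exact hI w hw.1 σ
  · intro hτ
    obtain ⟨w, hw, σ, heq, -⟩ := reduce hI h0 (∑ l, τ l) τ hτ le_rfl
    exact ⟨w, hw, σ, heq⟩


lemma isMult_star {I : Set (Fin n → ℕ)} (hI : MonomialIdeal I) {τ : Fin n → ℕ}
    (hτ : τ ∈ I) {j : Fin n} (hz : ∀ l, l < j → τ l = 0) : IsMult (starSet I) τ j := by
  rintro ⟨τ', ⟨hτ'I, m', hm', hz', hd'⟩, hlt, hup⟩
  have hm'j : m' ≤ j := by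
    by_contra h
    push_neg at h
    have := hz' j h
    omega
  apply hd'
  apply le_mem hI hτ
  intro l
  have hpt : (τ' - Pi.single m' 1 : Fin n → ℕ) l = τ' l - (if l = m' then 1 else 0) := by
    simp [Pi.sub_apply, single_apply]
  rw [hpt]
  rcases lt_trichotomy l j with h | h | h
  · rw [hz l h]; omega
  · subst h
    have hite : (if l = m' then 1 else 0) ≤ 1 := by split <;> omega
    omega
  · have h1 : τ' l = τ l := hup l h
    have h2 : l ≠ m' := by
      intro hc
      subst hc
      exact absurd h (not_lt.mpr hm'j)
    rw [if_neg h2, h1]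
    omega

lemma key {I : Set (Fin n → ℕ)} (hI : MonomialIdeal I) (h0 : (0 : Fin n → ℕ) ∉ I)
    {τ : Fin n → ℕ} (hτ : τ ∈ starSet I) {j : Fin n} {l₀ : Fin n} (hl₀j : l₀ < j)
    (hl₀ : τ l₀ ≠ 0) :
    ∃ w ∈ starSet I, ∃ σ : Fin n → ℕ,
      τ + Pi.single j 1 = w + σ ∧ (∀ l, σ l ≠ 0 → ∀ l', l' < l → w l' = 0) ∧
      w j = τ j + 1 ∧ ∀ l, j < l → w l = τ l := by
  obtain ⟨hτI, m, hm, hz, hd⟩ := hτ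
  have hmj : m < j := by
    rcases lt_or_ge m j with h | h
    · exact h
    · exact absurd (hz l₀ (lt_of_lt_of_le hl₀j h)) hl₀
  have hξ : τ + Pi.single j 1 ∈ I := hI τ hτI _
  obtain ⟨w, hw, σ, heq, hcond⟩ :=
    reduce hI h0 (∑ l, (τ + Pi.single j 1 : Fin n → ℕ) l) _ hξ le_rfl
  have heqpt : ∀ l, τ l + (if l = j then 1 else 0) = w l + σ l := by
    intro l
    have := congrFun heq l
    simpa [Pi.add_apply, single_apply] using this
  have hkey : ∀ l : Fin n, j ≤ l → σ l = 0 := by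
    by_contra hc
    push_neg at hc
    obtain ⟨a, hja, hσa⟩ := hc
    apply hd
    apply le_mem hI hw.1
    intro l
    have hpt : (τ - Pi.single m 1 : Fin n → ℕ) l = τ l - (if l = m then 1 else 0) := by
      simp [Pi.sub_apply, single_apply]
    rw [hpt]
    rcases lt_trichotomy l a with h | h | h
    · rw [hcond a hσa l h]; omega
    · subst h
      have h1 := heqpt l
      have h2 : l ≠ m := by
        intro hc'; subst hc'
        exact absurd (lt_of_lt_of_le hmj hja) (lt_irrefl l)
      rw [if_neg h2]
      have hite : (if l = j then 1 else 0) ≤ 1 := by split <;> omega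
      omega
    · have h1 := heqpt l
      have h2 : l ≠ j := by
        intro hc'; subst hc'
        exact absurd (lt_of_le_of_lt hja h) (lt_irrefl l)
      have h3 : l ≠ m := by
        intro hc'; subst hc'
        exact absurd (hmj.trans (lt_of_le_of_lt hja h)) (lt_irrefl l)
      rw [if_neg h3]
      rw [if_neg h2] at h1
      omega
  have hwj : w j = τ j + 1 := by
    have h1 := heqpt j
    rw [if_pos rfl] at h1
    have h2 := hkey j le_rfl
    omega
  have hwup : ∀ l, j < l → w l = τ l := by
    intro l hl
    have h1 := heqpt l
    rw [if_neg (by intro hc; subst hc; exact lt_irrefl l hl)] at h1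
    have h2 := hkey l hl.le
    omega
  exact ⟨w, hw, σ, heq, hcond, hwj, hwup⟩

lemma star_stably_complete {I : Set (Fin n → ℕ)} (hI : MonomialIdeal I)
    (h0 : (0 : Fin n → ℕ) ∉ I) : IsStablyComplete (starSet I) := by
  have hchar : ∀ τ ∈ starSet I, ∀ j : Fin n,
      (IsMult (starSet I) τ j ↔ ∀ l : Fin n, l < j → τ l = 0) := by
    intro τ hτ j
    constructor
    · intro hmult
      by_contra hc
      push_neg at hc
      obtain ⟨l₀, hl₀j, hl₀⟩ := hc
      obtain ⟨w, hw, σ, -, -, hwj, hwup⟩ := key hI h0 hτ hl₀j hl₀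
      exact hmult ⟨w, hw, by omega, hwup⟩
    · intro hz
      exact isMult_star hI hτ.1 hz
  refine ⟨?_, hchar⟩
  intro τ hτ j hnm
  have hc : ¬ ∀ l : Fin n, l < j → τ l = 0 := fun h => hnm ((hchar τ hτ j).mpr h)
  push_neg at hc
  obtain ⟨l₀, hl₀j, hl₀⟩ := hc
  obtain ⟨w, hw, σ, heq, hcond, -, -⟩ := key hI h0 hτ hl₀j hl₀
  exact ⟨w, hw, σ, fun l hl => isMult_star hI hw.1 (hcond l hl), heq⟩


def minVal (υ : Fin n → ℕ) : ℕ :=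
  ((Fin.find? fun l => υ l ≠ 0).map Fin.val).getD n

lemma minVal_eq {υ : Fin n → ℕ} {m : Fin n} (hm : υ m ≠ 0) (hz : ∀ l, l < m → υ l = 0) :
    minVal υ = (m : ℕ) := by
  have hfind : Fin.find? (fun l => υ l ≠ 0) = some m := by
    rw [Fin.find?_eq_some_iff]
    refine ⟨by simpa using hm, fun j hj => by simpa using hz j hj⟩
  rw [minVal, hfind]; rfl

lemma minVal_le (υ : Fin n → ℕ) : minVal υ ≤ n := by
  unfold minVal
  cases h : Fin.find? fun l => υ l ≠ 0 with
  | none => simp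
  | some i => simp [h, le_of_lt i.isLt]

lemma geom_aux {B : ℕ} (hB : 1 ≤ B) (k : ℕ) :
    (B - 1) * (∑ i ∈ Finset.range k, B ^ i) + 1 = B ^ k := by
  obtain ⟨b, rfl⟩ : ∃ b, B = b + 1 := ⟨B - 1, by omega⟩
  simp only [Nat.add_sub_cancel]
  induction k with
  | zero => simp
  | succ k ih =>
    rw [Finset.sum_range_succ, Nat.mul_add, pow_succ]
    have h4 : (b + 1) ^ k * (b + 1) = (b + 1) ^ k * b + (b + 1) ^ k := by ring
    have h3 : b * (b + 1) ^ k = (b + 1) ^ k * b := mul_comm _ _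
    omega

lemma sum_bound {B k : ℕ} (hB : 2 ≤ B) (f : Fin n → ℕ)
    (hf : ∀ l, f l ≤ B - 1) (hsupp : ∀ l : Fin n, k ≤ (l : ℕ) → f l = 0) :
    (∑ l, f l * B ^ (l : ℕ)) < B ^ k := by
  classical
  set g : ℕ → ℕ := fun i => if h : i < n then f ⟨i, h⟩ * B ^ i else 0 with hg
  have h1 : (∑ l, f l * B ^ (l : ℕ)) = ∑ i ∈ Finset.range n, g i := by
    rw [Finset.sum_range fun i => g i]
    apply Finset.sum_congr rfl
    intro l _
    simp [hg, l.isLt]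
  set h : ℕ → ℕ := fun i => if i < k then (B - 1) * B ^ i else 0 with hh
  have h2 : ∀ i, g i ≤ h i := by
    intro i
    simp only [hg, hh]
    split
    · rename_i hin
      split
      · exact Nat.mul_le_mul_right _ (hf _)
      · rename_i hik
        rw [hsupp ⟨i, hin⟩ (le_of_not_gt hik)]
        simp
    · simp
  have h3 : (∑ i ∈ Finset.range n, g i) ≤ ∑ i ∈ Finset.range (n + k), h i :=
    le_trans (Finset.sum_le_sum fun i _ => h2 i)
      (Finset.sum_le_sum_of_subset (Finset.range_subset_range.mpr (by omega)))
  have h4 : (∑ i ∈ Finset.range (n + k), h i) = ∑ i ∈ Finset.range k, (B - 1) * B ^ i := by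
    rw [← Finset.sum_subset (Finset.range_subset_range.mpr (by omega : k ≤ n + k))]
    · apply Finset.sum_congr rfl
      intro i hi
      rw [Finset.mem_range] at hi
      simp [hh, hi]
    · intro i _ hik
      rw [Finset.mem_range] at hik
      simp [hh, hik]
  have h5 := geom_aux (by omega : 1 ≤ B) k
  rw [Finset.mul_sum] at h5
  omega


lemma covering {I M : Set (Fin n → ℕ)} (hI : MonomialIdeal I) (h0 : (0 : Fin n → ℕ) ∉ I)
    (hgen : genBy M = I) (hsc : IsStablyComplete M) :
    ∀ ξ ∈ I, ∃ υ ∈ M, ∃ σ : Fin n → ℕ,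
      ξ = υ + σ ∧ ∀ l, σ l ≠ 0 → ∀ l', l' < l → υ l' = 0 := by
  intro ξ hξ
  classical
  obtain ⟨hcomp, hchar⟩ := hsc
  have hMI : ∀ υ ∈ M, υ ∈ I := fun υ hυ => hgen ▸ genBy_self hυ
  set B : ℕ := (∑ l, ξ l) + 2 with hB
  have hB2 : 2 ≤ B := by omega
  have hξbd : ∀ l, ξ l ≤ B - 2 := by
    intro l
    have := Finset.single_le_sum (f := ξ) (fun i _ => Nat.zero_le _) (Finset.mem_univ l)
    omega
  set N : (Fin n → ℕ) → ℕ := fun υ => ∑ l, υ l * B ^ (l : ℕ) with hN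
  set score : (Fin n → ℕ) → ℕ := fun υ => minVal υ * B ^ n + N υ with hscore
  set S : Set ℕ := {k | ∃ υ ∈ M, (∀ l, υ l ≤ ξ l) ∧ score υ = k} with hS
  have hSne : S.Nonempty := by
    rw [← hgen] at hξ
    obtain ⟨υ₀, hυ₀, σ₀, heq₀⟩ := hξ
    refine ⟨score υ₀, υ₀, hυ₀, fun l => ?_, rfl⟩
    have := congrFun heq₀ l
    simp only [Pi.add_apply] at this
    omega
  have hNbd : ∀ υ : Fin n → ℕ, (∀ l, υ l ≤ ξ l) → N υ < B ^ n := by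
    intro υ hle
    apply sum_bound hB2 υ (fun l => by have := hξbd l; have := hle l; omega)
      (fun l hl => absurd l.isLt (by omega))
  have hSbdd : BddAbove S := by
    refine ⟨n * B ^ n + B ^ n, ?_⟩
    rintro k ⟨υ, hυ, hle, rfl⟩
    have h1 : N υ < B ^ n := hNbd υ hle
    have h2 : minVal υ * B ^ n ≤ n * B ^ n := Nat.mul_le_mul_right _ (minVal_le υ)
    simp only [hscore]
    omega
  obtain ⟨υ, hυM, hυle, hυmax⟩ : ∃ υ ∈ M, (∀ l, υ l ≤ ξ l) ∧ score υ = sSup S :=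
    Nat.sSup_mem hSne hSbdd
  have hmax : ∀ υ' ∈ M, (∀ l, υ' l ≤ ξ l) → score υ' ≤ score υ := by
    intro υ' h1 h2
    rw [hυmax]
    exact le_csSup hSbdd ⟨υ', h1, h2, rfl⟩
  refine ⟨υ, hυM, ξ - υ, ?_, ?_⟩
  · funext l
    simp only [Pi.add_apply, Pi.sub_apply]
    have := hυle l
    omega
  · by_contra hc
    push_neg at hc
    obtain ⟨j, hσj, l₀, hl₀j, hυl₀⟩ := hc
    have hσj' : υ j < ξ j := by
      have h := hυle j
      simp only [Pi.sub_apply] at hσj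
      omega
    have hυI : υ ∈ I := hMI υ hυM
    obtain ⟨m₀, hm₀, hz₀⟩ := exists_min (mem_ne_zero h0 hυI)
    have hm₀j : m₀ < j := by
      rcases lt_or_ge l₀ m₀ with h | h
      · exact absurd (hz₀ l₀ h) hυl₀
      · exact lt_of_le_of_lt h hl₀j
    have hni : ¬ IsMult M υ j := fun h => hυl₀ ((hchar υ hυM j).mp h l₀ hl₀j)
    obtain ⟨τ', hτ'M, ρ, hρm, heq'⟩ := hcomp υ hυM j hni
    have heqpt : ∀ l, υ l + (if l = j then 1 else 0) = τ' l + ρ l := by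
      intro l
      have := congrFun heq' l
      simpa [Pi.add_apply, single_apply] using this
    have hρz : ∀ l, ρ l ≠ 0 → ∀ l', l' < l → τ' l' = 0 :=
      fun l hl => (hchar τ' hτ'M l).mp (hρm l hl)
    have hτ'I : τ' ∈ I := hMI τ' hτ'M
    obtain ⟨m', hm', hz'⟩ := exists_min (mem_ne_zero h0 hτ'I)
    have hτ'le : ∀ l, τ' l ≤ ξ l := by
      intro l
      have h1 := heqpt l
      rcases eq_or_ne l j with h | h
      · subst h; rw [if_pos rfl] at h1; omega
      · rw [if_neg h] at h1; have := hυle l; omega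
    have hmv : minVal υ = (m₀ : ℕ) := minVal_eq hm₀ hz₀
    have hmv' : minVal τ' = (m' : ℕ) := minVal_eq hm' hz'
    have hm₀m' : m₀ ≤ m' := by
      by_contra h
      push_neg at h
      have h1 := heqpt m'
      have h2 : m' ≠ j := ne_of_lt (h.trans hm₀j)
      rw [if_neg h2] at h1
      have h3 := hz₀ m' h
      omega
    have hρsupp : ∀ l : Fin n, ρ l ≠ 0 → l ≤ m' := by
      intro l hl
      by_contra h
      push_neg at h
      exact hm' (hρz l hl m' h)
    have hNeq : N τ' + N ρ = N υ + B ^ (j : ℕ) := by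
      have h1 : (∑ l, (τ' l + ρ l) * B ^ (l : ℕ)) =
          ∑ l, (υ l + (if l = j then 1 else 0)) * B ^ (l : ℕ) :=
        Finset.sum_congr rfl fun l _ => by rw [← heqpt l]
      have h2 : (∑ l : Fin n, (if l = j then 1 else 0) * B ^ (l : ℕ)) = B ^ (j : ℕ) := by
        rw [Finset.sum_eq_single j]
        · simp
        · intro b _ hb; simp [hb]
        · intro hj; exact absurd (Finset.mem_univ j) hj
      simp only [add_mul, Finset.sum_add_distrib] at h1
      simp only [hN]
      omega
    have hρbd : ∀ l, ρ l ≤ B - 1 := by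
      intro l
      have h1 := heqpt l
      have h2 := hυle l
      have h3 := hξbd l
      have hite : (if l = j then 1 else 0) ≤ 1 := by split <;> omega
      omega
    have hjval : (m₀ : ℕ) < (j : ℕ) := hm₀j
    have hscoregt : score υ < score τ' := by
      rcases eq_or_lt_of_le hm₀m' with h | h
      · have hNρ : N ρ < B ^ ((m' : ℕ) + 1) := by
          apply sum_bound hB2 ρ hρbd
          intro l hl
          by_contra hlnz
          have h4 : l ≤ m' := hρsupp l hlnz
          have h5 : (l : ℕ) ≤ (m' : ℕ) := h4
          omega
        have hpow : B ^ ((m' : ℕ) + 1) ≤ B ^ (j : ℕ) := by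
          apply Nat.pow_le_pow_right (by omega)
          have h6 : (m₀ : ℕ) = (m' : ℕ) := by rw [h]
          omega
        have h6 : (m₀ : ℕ) = (m' : ℕ) := by rw [h]
        simp only [hscore, hmv, hmv', h6]
        omega
      · have hNυ : N υ < B ^ n := hNbd υ hυle
        have h1 : ((m₀ : ℕ) + 1) * B ^ n ≤ (m' : ℕ) * B ^ n := by
          apply Nat.mul_le_mul_right
          have : (m₀ : ℕ) < (m' : ℕ) := h
          omega
        simp only [hscore, hmv, hmv']
        have h2 : ((m₀ : ℕ) + 1) * B ^ n = (m₀ : ℕ) * B ^ n + B ^ n := by ring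
        omega
    exact absurd (hmax τ' hτ'M hτ'le) (not_le.mpr hscoregt)


lemma M_subset_star {I M : Set (Fin n → ℕ)} (hI : MonomialIdeal I) (h0 : (0 : Fin n → ℕ) ∉ I)
    (hgen : genBy M = I) (hsc : IsStablyComplete M) : M ⊆ starSet I := by
  intro τ hτM
  classical
  have hτI : τ ∈ I := hgen ▸ genBy_self hτM
  obtain ⟨m, hm, hz⟩ := exists_min (mem_ne_zero h0 hτI)
  refine ⟨hτI, m, hm, hz, ?_⟩
  intro hd
  obtain ⟨υ, hυM, σ, heq, hcond⟩ := covering hI h0 hgen hsc _ hd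
  have hpt : ∀ l, τ l = υ l + σ l + (if l = m then 1 else 0) := by
    intro l
    have h1 := congrFun heq l
    simp only [Pi.sub_apply, Pi.add_apply, single_apply] at h1
    rcases eq_or_ne l m with h | h
    · rw [if_pos h] at h1 ⊢
      have : τ m ≠ 0 := hm
      subst h
      omega
    · rw [if_neg h] at h1 ⊢
      omega
  set s := Finset.univ.filter (fun l => υ l < τ l) with hs
  have hsne : s.Nonempty := by
    refine ⟨m, ?_⟩
    simp only [hs, Finset.mem_filter]
    refine ⟨Finset.mem_univ m, ?_⟩
    have := hpt m
    rw [if_pos rfl] at this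
    omega
  set j := s.max' hsne with hj
  have hj1 : υ j < τ j := by
    have := s.max'_mem hsne
    simp only [hs, Finset.mem_filter] at this
    exact this.2
  have hj2 : ∀ l, j < l → τ l = υ l := by
    intro l hl
    by_contra hne
    have hle : υ l ≤ τ l + 0 := by have := hpt l; omega
    have hmem : l ∈ s := by
      simp only [hs, Finset.mem_filter]
      exact ⟨Finset.mem_univ l, by omega⟩
    have := s.le_max' l hmem
    rw [← hj] at this
    exact absurd (lt_of_lt_of_le hl this) (lt_irrefl j)
  have hzυ : ∀ l : Fin n, l < j → υ l = 0 := by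
    intro l hl
    by_cases hσj : σ j = 0
    · have h1 := hpt j
      have h2 : j = m := by
        by_contra h
        rw [if_neg h] at h1
        omega
      have h3 : τ l = 0 := hz l (h2 ▸ hl)
      have := hpt l
      omega
    · exact hcond j hσj l hl
  exact (hsc.2 υ hυM j).mpr hzυ ⟨τ, hτM, hj1, hj2⟩

lemma star_subset_M {I M : Set (Fin n → ℕ)} (hI : MonomialIdeal I) (h0 : (0 : Fin n → ℕ) ∉ I)
    (hgen : genBy M = I) (hsc : IsStablyComplete M) : starSet I ⊆ M := by
  intro τ hτ
  obtain ⟨hτI, m, hm, hz, hd⟩ := hτ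
  obtain ⟨υ, hυM, σ, heq, hcond⟩ := covering hI h0 hgen hsc τ hτI
  have hpt : ∀ l, τ l = υ l + σ l := fun l => congrFun heq l
  by_cases hσm : σ m = 0
  · have hσ0 : ∀ l, σ l = 0 := by
      intro l
      by_contra hl
      have hzz := hcond l hl
      rcases lt_trichotomy l m with h | h | h
      · have := hz l h
        have := hpt l
        omega
      · exact hl (by rw [h]; exact hσm)
      · have h1 := hzz m h
        have h2 := hpt m
        omega
    have hτυ : τ = υ := funext fun l => by have := hpt l; have := hσ0 l; omega
    exact hτυ ▸ hυM
  · exfalso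
    apply hd
    have hυI : υ ∈ I := hgen ▸ genBy_self hυM
    apply le_mem hI hυI
    intro l
    have h1 := hpt l
    simp only [Pi.sub_apply, single_apply]
    rcases eq_or_ne l m with h | h
    · rw [if_pos h]
      subst h
      omega
    · rw [if_neg h]
      omega

end StarAux

theorem starSet_unique_stably_complete {n : ℕ}
    (I : Set (Fin n → ℕ)) (hI : MonomialIdeal I)
    (h0 : (0 : Fin n → ℕ) ∉ I) :
    genBy (starSet I) = I ∧ IsStablyComplete (starSet I) ∧
    ∀ M : Set (Fin n → ℕ), genBy M = I → IsStablyComplete M → M = starSet I := by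
  refine ⟨StarAux.genBy_starSet hI h0, StarAux.star_stably_complete hI h0, ?_⟩
  intro M hgen hsc
  exact Set.Subset.antisymm (StarAux.M_subset_star hI h0 hgen hsc)
    (StarAux.star_subset_M hI h0 hgen hsc)
end

section
/- Let N ⊂ k[x₁,x₂,x₃] be the escalier of a stable monomial ideal J with |N| = p, and for 0 ≤ i, 0 ≤ j let ρ_{i+1,j+1} = |{a : x₁ᵃx₂ʲx₃ⁱ ∈ N}|. Then the nonzero values ρ_{i,j} form a plane partition that is strictly decreasing along rows and strictly decreasing down columns: ρ_{i,j} > ρ_{i,j+1} whenever ρ_{i,j+1} > 0, and ρ_{i,j} > ρ_{i+1,j} whenever ρ_{i+1,j} > 0, and the total sum of all ρ_{i,j} equals p. -/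
/-- The monomial `x₁^a x₂^b x₃^c` of `k[x₁,x₂,x₃]`, as an exponent vector. -/
def mon3 (a b c : ℕ) : Fin 3 → ℕ := ![a, b, c]

theorem IsLowerSet.mem_iff_lt_ncard {S : Set ℕ} (hS : IsLowerSet S) (hfin : S.Finite) (a : ℕ) :
    a ∈ S ↔ a < S.ncard := by
  obtain rfl | ⟨n, rfl⟩ := hS.eq_univ_or_Iio
  · exact absurd hfin Set.infinite_univ
  · simp

theorem Set.support_ncard_inter_preimage_subset {α β : Type*} (S : Set α) (f : α → β) :
    (Function.support fun b => (S ∩ f ⁻¹' {b}).ncard) ⊆ f '' S := fun b hb => by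
  obtain ⟨x, hxS, hxb⟩ := Set.nonempty_of_ncard_ne_zero hb
  exact ⟨x, hxS, hxb⟩

theorem Set.ncard_eq_finsum_ncard_inter_preimage {α β : Type*} {S : Set α} (hS : S.Finite)
    (f : α → β) : S.ncard = ∑ᶠ b, (S ∩ f ⁻¹' {b}).ncard := by
  classical
  rw [finsum_eq_sum_of_support_subset _ (s := hS.toFinset.image f)
      (by simpa using S.support_ncard_inter_preimage_subset f),
    Set.ncard_eq_toFinset_card S hS, Finset.card_eq_sum_card_image f]
  refine Finset.sum_congr rfl fun b _ => ?_
  rw [← Set.ncard_coe_finset]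
  congr 1
  ext x
  simp

theorem MonomialIdeal.isUpperSet {n : ℕ} {I : Set (Fin n → ℕ)} (hI : MonomialIdeal I) :
    IsUpperSet I := fun τ σ hle hτ => by
  simpa [add_tsub_cancel_of_le hle] using hI τ hτ (σ - τ)

theorem IsStable.add_single_mem {n : ℕ} {I : Set (Fin (n + 1) → ℕ)} (hst : IsStable I)
    {τ : Fin (n + 1) → ℕ} (hτ : τ + Pi.single 0 1 ∈ I) {j : Fin (n + 1)} (hj : 0 < j) :
    τ + Pi.single j 1 ∈ I := by
  simpa using hst _ hτ 0 j (by simp) (fun l hl => absurd hl (Fin.not_lt_zero l)) hj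

theorem mon3_injective_left (b c : ℕ) : Function.Injective fun a => mon3 a b c :=
  fun a a' h => by simpa [mon3] using congrFun h 0

theorem mon3_monotone_left (b c : ℕ) : Monotone fun a => mon3 a b c := fun a a' h k => by
  fin_cases k <;> simp [mon3, h]

theorem mon3_succ_left (a b c : ℕ) : mon3 (a + 1) b c = mon3 a b c + Pi.single 0 1 := by
  funext k; fin_cases k <;> simp [mon3]

theorem mon3_succ_middle (a b c : ℕ) : mon3 a (b + 1) c = mon3 a b c + Pi.single 1 1 := by
  funext k; fin_cases k <;> simp [mon3]

theorem mon3_succ_right (a b c : ℕ) : mon3 a b (c + 1) = mon3 a b c + Pi.single 2 1 := by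
  funext k; fin_cases k <;> simp [mon3]

theorem mon3_eta (τ : Fin 3 → ℕ) : mon3 (τ 0) (τ 1) (τ 2) = τ := by
  funext k; fin_cases k <;> rfl

theorem finsum_finsum_card_mon3_mem {S : Set (Fin 3 → ℕ)} (hS : S.Finite) :
    ∑ᶠ (i : ℕ) (j : ℕ), Nat.card {a : ℕ | mon3 a j i ∈ S} = Nat.card S := by
  let π : (Fin 3 → ℕ) → ℕ × ℕ := fun τ => (τ 2, τ 1)
  have hfiber (i j : ℕ) :
      S ∩ π ⁻¹' {(i, j)} = (fun a => mon3 a j i) '' {a | mon3 a j i ∈ S} := by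
    ext τ
    constructor
    · rintro ⟨hτ, hπ⟩
      obtain ⟨rfl, rfl⟩ := Prod.mk.inj hπ
      exact ⟨τ 0, (mon3_eta τ).symm ▸ hτ, mon3_eta τ⟩
    · rintro ⟨a, ha, rfl⟩
      exact ⟨ha, rfl⟩
  rw [Nat.card_coe_set_eq, Set.ncard_eq_finsum_ncard_inter_preimage hS π,
    finsum_curry _ ((hS.image π).subset (S.support_ncard_inter_preimage_subset π))]
  simp_rw [hfiber, Set.ncard_image_of_injective _ (mon3_injective_left _ _),
    Nat.card_coe_set_eq]

/-- `escalierHeight J i j` is the paper's `ρ_{i+1,j+1}`: `i` is the exponent of `x₃`, `j` that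
of `x₂`. -/
noncomputable def escalierHeight (J : Set (Fin 3 → ℕ)) (i j : ℕ) : ℕ :=
  Nat.card {a : ℕ | mon3 a j i ∉ J}

section Escalier

variable {J : Set (Fin 3 → ℕ)} (hJ : MonomialIdeal J) (hfin : {τ : Fin 3 → ℕ | τ ∉ J}.Finite)
include hJ hfin

theorem mon3_notMem_iff_lt_escalierHeight (i j a : ℕ) :
    mon3 a j i ∉ J ↔ a < escalierHeight J i j := by
  have hlower : IsLowerSet {a | mon3 a j i ∉ J} :=
    hJ.isUpperSet.compl.preimage (mon3_monotone_left j i)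
  rw [escalierHeight, Nat.card_coe_set_eq]
  exact hlower.mem_iff_lt_ncard (hfin.preimage (mon3_injective_left j i).injOn) a

theorem escalierHeight_lt_of_shift {i j i' j' : ℕ}
    (hshift : ∀ a, mon3 (a + 1) j i ∈ J → mon3 a j' i' ∈ J)
    (hpos : 0 < escalierHeight J i' j') :
    escalierHeight J i' j' < escalierHeight J i j := by
  obtain ⟨r, hr⟩ := Nat.exists_eq_add_one_of_ne_zero hpos.ne'
  rw [hr, ← mon3_notMem_iff_lt_escalierHeight hJ hfin]
  exact fun hmem => (mon3_notMem_iff_lt_escalierHeight hJ hfin i' j' r).2 (hr ▸ r.lt_add_one)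
    (hshift r hmem)

variable (hst : IsStable J)
include hst

theorem escalierHeight_succ_right_lt {i j : ℕ} (hpos : 0 < escalierHeight J i (j + 1)) :
    escalierHeight J i (j + 1) < escalierHeight J i j :=
  escalierHeight_lt_of_shift hJ hfin (fun a ha => by
    rw [mon3_succ_middle]
    exact hst.add_single_mem (mon3_succ_left a j i ▸ ha) (by decide)) hpos

theorem escalierHeight_succ_left_lt {i j : ℕ} (hpos : 0 < escalierHeight J (i + 1) j) :
    escalierHeight J (i + 1) j < escalierHeight J i j :=
  escalierHeight_lt_of_shift hJ hfin (fun a ha => by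
    rw [mon3_succ_right]
    exact hst.add_single_mem (mon3_succ_left a j i ▸ ha) (by decide)) hpos

end Escalier

theorem stable_escalier_gives_strict_plane_partition
    (J : Set (Fin 3 → ℕ)) (hJ : MonomialIdeal J) (hst : IsStable J)
    (hfin : {τ : Fin 3 → ℕ | τ ∉ J}.Finite)
    (p : ℕ) (hp : Nat.card {τ : Fin 3 → ℕ | τ ∉ J} = p)
    (ρ : ℕ → ℕ → ℕ)
    (hρ : ∀ i j, ρ i j = Nat.card {a : ℕ | mon3 a j i ∉ J}) :
    (∀ i j, 0 < ρ i (j + 1) → ρ i (j + 1) < ρ i j) ∧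
    (∀ i j, 0 < ρ (i + 1) j → ρ (i + 1) j < ρ i j) ∧
    (∑ᶠ (i : ℕ) (j : ℕ), ρ i j = p) := by
  obtain rfl : ρ = escalierHeight J := funext₂ hρ
  exact ⟨fun _ _ => escalierHeight_succ_right_lt hJ hfin hst,
    fun _ _ => escalierHeight_succ_left_lt hJ hfin hst,
    hp ▸ finsum_finsum_card_mon3_mem hfin⟩
end

section
/- Let J be a stable zerodimensional monomial ideal in k[x₁,x₂,x₃] with escalier data ρ_{i,j} = |{a : x₁ᵃx₂^{j-1}x₃^{i-1} ∈ N(J)}|, k the number of nonzero rows and βᵢ the number of nonzero entries in row i. Then the star set (equivalently the minimal generating set) of J is exactly { x₃ᵏ } ∪ { x₂^{βᵢ}x₃^{i-1} : 1 ≤ i ≤ k } ∪ { x₁^{ρ_{i,j}}x₂^{j-1}x₃^{i-1} : 1 ≤ i ≤ k, 1 ≤ j ≤ βᵢ }. -/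
theorem IsLowerSet.lt_natCard_iff {s : Set ℕ} (hs : IsLowerSet s) (hfin : s.Finite) (n : ℕ) :
    n < Nat.card s ↔ n ∈ s := by
  obtain rfl | ⟨a, rfl⟩ := hs.eq_univ_or_Iio
  · exact absurd hfin Set.infinite_univ
  · simp

theorem Nat.and_ne_zero_and_not_pred_iff {P : ℕ → Prop} {N : ℕ} (hP : ∀ n, P n ↔ N ≤ n)
    (n : ℕ) : P n ∧ n ≠ 0 ∧ ¬P (n - 1) ↔ n = N ∧ 0 < N := by
  simp only [hP]
  omega

theorem MonomialIdeal.isLowerSet_compl {n : ℕ} {J : Set (Fin n → ℕ)} (hJ : MonomialIdeal J) :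
    IsLowerSet Jᶜ := fun τ σ hστ hτ hσ => hτ <| add_tsub_cancel_of_le hστ ▸ hJ σ hσ (τ - σ)

theorem MonomialIdeal.natCard_le_iff_mem {n : ℕ} {J : Set (Fin n → ℕ)} (hJ : MonomialIdeal J)
    (hfin : {τ : Fin n → ℕ | τ ∉ J}.Finite) {f : ℕ → Fin n → ℕ} (hf : StrictMono f) (m : ℕ) :
    Nat.card {i | f i ∉ J} ≤ m ↔ f m ∈ J := by
  have hlow : IsLowerSet {i | f i ∉ J} := hJ.isLowerSet_compl.preimage hf.monotone
  rw [← not_lt, hlow.lt_natCard_iff (hfin.preimage hf.injective.injOn), Set.mem_ofPred_eq,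
    not_not]

theorem exists_eq_mon3 (τ : Fin 3 → ℕ) : ∃ a b c, τ = mon3 a b c :=
  ⟨τ 0, τ 1, τ 2, by ext i; fin_cases i <;> rfl⟩

theorem mon3_zero : mon3 0 0 0 = 0 := by
  ext i; fin_cases i <;> rfl

theorem mon3_inj {a b c a' b' c' : ℕ} :
    mon3 a b c = mon3 a' b' c' ↔ a = a' ∧ b = b' ∧ c = c' := by
  simp [funext_iff, Fin.forall_fin_succ, mon3]

theorem mon3_le_mon3 {a b c a' b' c' : ℕ} :
    mon3 a b c ≤ mon3 a' b' c' ↔ a ≤ a' ∧ b ≤ b' ∧ c ≤ c' := by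
  simp [Pi.le_def, Fin.forall_fin_succ, mon3]

theorem mon3_sub_mon3 (a b c a' b' c' : ℕ) :
    mon3 a b c - mon3 a' b' c' = mon3 (a - a') (b - b') (c - c') := by
  ext i; fin_cases i <;> rfl

theorem single_one_eq_mon3 :
    Pi.single 0 1 = mon3 1 0 0 ∧ Pi.single 1 1 = mon3 0 1 0 ∧ Pi.single 2 1 = mon3 0 0 1 := by
  refine ⟨?_, ?_, ?_⟩ <;> ext i <;> fin_cases i <;> rfl

theorem strictMono_mon3_fst (b c : ℕ) : StrictMono (mon3 · b c) := fun _ _ h =>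
  lt_of_le_of_ne (mon3_le_mon3.2 ⟨h.le, le_rfl, le_rfl⟩) (by simp [mon3_inj, h.ne])

theorem strictMono_mon3_snd (a c : ℕ) : StrictMono (mon3 a · c) := fun _ _ h =>
  lt_of_le_of_ne (mon3_le_mon3.2 ⟨le_rfl, h.le, le_rfl⟩) (by simp [mon3_inj, h.ne])

theorem strictMono_mon3_thd (a b : ℕ) : StrictMono (mon3 a b ·) := fun _ _ h =>
  lt_of_le_of_ne (mon3_le_mon3.2 ⟨le_rfl, le_rfl, h.le⟩) (by simp [mon3_inj, h.ne])

theorem mem_starSet_mon3_iff {J : Set (Fin 3 → ℕ)} {a b c : ℕ} :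
    mon3 a b c ∈ starSet J ↔
      (mon3 a b c ∈ J ∧ a ≠ 0 ∧ mon3 (a - 1) b c ∉ J) ∨
      (a = 0 ∧ mon3 0 b c ∈ J ∧ b ≠ 0 ∧ mon3 0 (b - 1) c ∉ J) ∨
      (a = 0 ∧ b = 0 ∧ mon3 0 0 c ∈ J ∧ c ≠ 0 ∧ mon3 0 0 (c - 1) ∉ J) := by
  obtain ⟨h0, h1, h2⟩ := single_one_eq_mon3
  simp only [starSet, Set.mem_ofPred_eq, Fin.exists_fin_succ, Fin.succ_zero_eq_one,
    Fin.succ_one_eq_two, IsEmpty.exists_iff, h0, h1, h2, mon3_sub_mon3]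
  by_cases ha : a = 0 <;> by_cases hb : b = 0 <;> simp [Fin.forall_fin_succ, mon3, ha, hb]

section Escalier

variable {J : Set (Fin 3 → ℕ)} {ρ : ℕ → ℕ → ℕ} {β : ℕ → ℕ} {k : ℕ}

theorem mon3_mem_iff (hJ : MonomialIdeal J) (hfin : {τ : Fin 3 → ℕ | τ ∉ J}.Finite)
    (hρ : ∀ i j, ρ i j = Nat.card {a : ℕ | mon3 a j i ∉ J}) (a j i : ℕ) :
    mon3 a j i ∈ J ↔ ρ i j ≤ a := by
  rw [hρ, hJ.natCard_le_iff_mem hfin (strictMono_mon3_fst j i)]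

theorem mon3_zero_mem_iff (hJ : MonomialIdeal J) (hfin : {τ : Fin 3 → ℕ | τ ∉ J}.Finite)
    (hρ : ∀ i j, ρ i j = Nat.card {a : ℕ | mon3 a j i ∉ J})
    (hβ : ∀ i, β i = Nat.card {j : ℕ | 0 < ρ i j}) (j i : ℕ) :
    mon3 0 j i ∈ J ↔ β i ≤ j := by
  have hset : {j : ℕ | 0 < ρ i j} = {j | mon3 0 j i ∉ J} := by
    ext j
    simp [mon3_mem_iff hJ hfin hρ, pos_iff_ne_zero]
  rw [hβ, hset, hJ.natCard_le_iff_mem hfin (strictMono_mon3_snd 0 i)]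

theorem mon3_zero_zero_mem_iff (hJ : MonomialIdeal J) (hfin : {τ : Fin 3 → ℕ | τ ∉ J}.Finite)
    (hρ : ∀ i j, ρ i j = Nat.card {a : ℕ | mon3 a j i ∉ J})
    (hk : k = Nat.card {i : ℕ | ∃ j, 0 < ρ i j}) (i : ℕ) :
    mon3 0 0 i ∈ J ↔ k ≤ i := by
  have hset : {i : ℕ | ∃ j, 0 < ρ i j} = {i | mon3 0 0 i ∉ J} := by
    ext i
    simp only [Set.mem_ofPred_eq, pos_iff_ne_zero, ne_eq, ← Nat.le_zero,
      ← mon3_mem_iff hJ hfin hρ]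
    exact ⟨fun ⟨j, hj⟩ => hJ.isLowerSet_compl (mon3_le_mon3.2 ⟨le_rfl, j.zero_le, le_rfl⟩) hj,
      fun h => ⟨0, h⟩⟩
  rw [hk, hset, hJ.natCard_le_iff_mem hfin (strictMono_mon3_thd 0 0)]

end Escalier

theorem starSet_of_stable_ideal_three_vars_general
    (J : Set (Fin 3 → ℕ)) (hJ : MonomialIdeal J)
    (hfin : {τ : Fin 3 → ℕ | τ ∉ J}.Finite) (h0 : (0 : Fin 3 → ℕ) ∉ J)
    (ρ : ℕ → ℕ → ℕ)
    (hρ : ∀ i j, ρ i j = Nat.card {a : ℕ | mon3 a j i ∉ J})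
    (k : ℕ) (hk : k = Nat.card {i : ℕ | ∃ j, 0 < ρ i j})
    (β : ℕ → ℕ) (hβ : ∀ i, β i = Nat.card {j : ℕ | 0 < ρ i j}) :
    starSet J = {τ : Fin 3 → ℕ | τ = mon3 0 0 k} ∪
      {τ : Fin 3 → ℕ | ∃ i < k, τ = mon3 0 (β i) i} ∪
      {τ : Fin 3 → ℕ | ∃ i < k, ∃ j < β i, τ = mon3 (ρ i j) j i} := by
  have hρJ := mon3_mem_iff hJ hfin hρ
  have hβJ := mon3_zero_mem_iff hJ hfin hρ hβ
  have hkJ := mon3_zero_zero_mem_iff hJ hfin hρ hk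
  ext τ
  obtain ⟨a, b, c, rfl⟩ := exists_eq_mon3 τ
  have hρβ : ρ c b ≤ 0 ↔ β c ≤ b := (hρJ 0 b c).symm.trans (hβJ b c)
  have hβk : β c ≤ 0 ↔ k ≤ c := (hβJ 0 c).symm.trans (hkJ c)
  have hk0 : ¬k ≤ 0 := by rwa [← hkJ, mon3_zero]
  rw [mem_starSet_mon3_iff, Nat.and_ne_zero_and_not_pred_iff (hρJ · b c),
    Nat.and_ne_zero_and_not_pred_iff (hβJ · c), Nat.and_ne_zero_and_not_pred_iff hkJ]
  simp only [Set.mem_union, Set.mem_ofPred_eq, mon3_inj, @eq_comm _ c, existsAndEq, and_true]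
  omega

theorem starSet_of_stable_ideal_three_vars
    (J : Set (Fin 3 → ℕ)) (hJ : MonomialIdeal J) (hst : IsStable J)
    (hfin : {τ : Fin 3 → ℕ | τ ∉ J}.Finite) (h0 : (0 : Fin 3 → ℕ) ∉ J)
    (ρ : ℕ → ℕ → ℕ)
    (hρ : ∀ i j, ρ i j = Nat.card {a : ℕ | mon3 a j i ∉ J})
    (k : ℕ) (hk : k = Nat.card {i : ℕ | ∃ j, 0 < ρ i j})
    (β : ℕ → ℕ) (hβ : ∀ i, β i = Nat.card {j : ℕ | 0 < ρ i j}) :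
    starSet J = {τ : Fin 3 → ℕ | τ = mon3 0 0 k} ∪
      {τ : Fin 3 → ℕ | ∃ i < k, τ = mon3 0 (β i) i} ∪
      {τ : Fin 3 → ℕ | ∃ i < k, ∃ j < β i, τ = mon3 (ρ i j) j i} :=
  starSet_of_stable_ideal_three_vars_general J hJ hfin h0 ρ hρ k hk β hβ
end
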